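/- Let R be a local ring and let M be an R-module generated by n elements. If M surjects onto a direct sum ⊕_{i=1}^{m} N_i of nonzero R-modules, then m ≤ n. -/

import Mathlib

/-!
Over a local ring `R` the nonunits form a maximal left ideal `𝔪`, and `𝔪` annihilates every
simple module: if `a ∈ 𝔪` and `a • x ≠ 0`, simplicity gives `x = r a x`, while `1 - r a` is a unit.
Each `N i` is a finitely generated nonzero quotient of `M`, so it has a simple quotient `S i`, and
`M` surjects onto `Π i, S i`, a module of length `m` annihilated by `𝔪`. A module annihilated by a
maximal left ideal `𝔪` and generated by `n` elements is a quotient of `(R ⧸ 𝔪)ⁿ`, which has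
length `n`.
-/

open DirectSum

theorem Module.length_le_card_of_span_eq_top {R P : Type*} [Ring R] [AddCommGroup P] [Module R P]
    {I : Ideal R} (hI : IsCoatom I) (hIP : ∀ a ∈ I, ∀ x : P, a • x = 0) (s : Finset P)
    (hs : Submodule.span R (s : Set P) = ⊤) : Module.length R P ≤ s.card := by
  classical
  have : IsSimpleModule R (R ⧸ I) := isSimpleModule_iff_isCoatom.mpr hI
  let g : (s → R ⧸ I) →ₗ[R] P := LinearMap.lsum R (fun _ => R ⧸ I) ℕ fun x =>
    I.liftQ (LinearMap.toSpanSingleton R P x) fun a ha => hIP a ha x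
  have hg : Function.Surjective g := by
    rw [← LinearMap.range_eq_top, eq_top_iff, ← hs, Submodule.span_le]
    intro x hx
    exact ⟨Pi.single ⟨x, hx⟩ (I.mkQ 1), (LinearMap.lsum_piSingle ..).trans (one_smul R x)⟩
  calc Module.length R P ≤ Module.length R (s → R ⧸ I) := Module.length_le_of_surjective g hg
    _ = s.card := by simp

theorem Module.exists_isCoatom_submodule (R N : Type*) [Ring R] [AddCommGroup N] [Module R N]
    [Module.Finite R N] [Nontrivial N] : ∃ W : Submodule R N, IsCoatom W :=
  ((eq_top_or_exists_le_coatom (⊥ : Submodule R N)).resolve_left bot_ne_top).imp fun _ h => h.1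

namespace IsLocalRing

variable {R : Type*} [Ring R] [IsLocalRing R]

theorem eq_zero_or_eq_one_of_isIdempotentElem {e : R} (he : IsIdempotentElem e) :
    e = 0 ∨ e = 1 := by
  rcases isUnit_or_isUnit_of_add_one (add_sub_cancel e 1) with h | h
  · exact .inr ((IsIdempotentElem.iff_eq_one_of_isUnit h).mp he)
  · exact .inl (by simpa using (IsIdempotentElem.iff_eq_one_of_isUnit h).mp he.one_sub)

instance : IsDedekindFiniteMonoid R where
  mul_eq_one_symm {a b} hab := by
    have he : IsIdempotentElem (b * a) := by
      rw [IsIdempotentElem, mul_assoc, ← mul_assoc a, hab, one_mul]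
    refine (eq_zero_or_eq_one_of_isIdempotentElem he).resolve_left fun hba => ?_
    have ha : a = 0 := calc
      a = a * b * a := by rw [hab, one_mul]
      _ = 0 := by rw [mul_assoc, hba, mul_zero]
    simp [ha] at hab

variable (R) in
def nonunitsIdeal : Ideal R where
  carrier := nonunits R
  add_mem' := nonunits_add
  zero_mem' := zero_mem_nonunits.mpr zero_ne_one
  smul_mem' _ _ hx hcx := hx (isUnit_of_mul_isUnit_right hcx)

theorem isCoatom_nonunitsIdeal : IsCoatom (nonunitsIdeal R) := by
  refine ⟨fun h => (h ▸ Submodule.mem_top : (1 : R) ∈ nonunitsIdeal R) isUnit_one, fun I hI => ?_⟩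
  obtain ⟨x, hxI, hx⟩ := SetLike.exists_of_lt hI
  exact I.eq_top_of_isUnit_mem hxI (not_not.mp hx)

theorem smul_eq_zero_of_not_isUnit {S : Type*} [AddCommGroup S] [Module R S] [IsSimpleModule R S]
    {a : R} (ha : ¬IsUnit a) (x : S) : a • x = 0 := by
  by_contra hax
  obtain ⟨r, hr⟩ := IsSimpleModule.toSpanSingleton_surjective R hax x
  have hx : (1 - r * a) • x = 0 := by
    rw [sub_smul, one_smul, mul_smul, ← LinearMap.toSpanSingleton_apply, hr, sub_self]
  have hu : IsUnit (1 - r * a) :=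
    (isUnit_or_isUnit_of_add_one (add_sub_cancel (r * a) 1)).resolve_left
      fun h => ha (isUnit_of_mul_isUnit_right h)
  exact hax (by rw [hu.smul_eq_zero.mp hx, smul_zero])

end IsLocalRing

/-- Let `R` be a (possibly noncommutative) local ring and `M` an
`R`-module generated by `n` elements. If `M` surjects onto a direct sum
`⊕_{i=1}^{m} N_i` of nonzero `R`-modules, then `m ≤ n`. -/
theorem le_of_surjective_onto_directSum {R : Type*} [Ring R] [IsLocalRing R]
    {M : Type*} [AddCommGroup M] [Module R M] {n : ℕ} (s : Finset M)
    (hs : s.card = n) (hspan : Submodule.span R (s : Set M) = ⊤)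
    {m : ℕ} (N : Fin m → Type*) [∀ i, AddCommGroup (N i)] [∀ i, Module R (N i)]
    (hN : ∀ i, Nontrivial (N i))
    (f : M →ₗ[R] ⨁ i, N i) (hf : Function.Surjective f) :
    m ≤ n := by
  classical
  have : Module.Finite R M := ⟨⟨s, hspan⟩⟩
  let F := (linearEquivFunOnFintype R (Fin m) N).toLinearMap ∘ₗ f
  have hF : Function.Surjective F := (linearEquivFunOnFintype R (Fin m) N).surjective.comp hf
  have (i : Fin m) : Module.Finite R (N i) :=
    .of_surjective ((LinearMap.proj i : (∀ j, N j) →ₗ[R] N i) ∘ₗ F)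
      ((LinearMap.proj_surjective (R := R) i).comp hF)
  choose W hW using fun i => have := hN i; Module.exists_isCoatom_submodule R (N i)
  have (i : Fin m) : IsSimpleModule R (N i ⧸ W i) := isSimpleModule_iff_isCoatom.mpr (hW i)
  let G := LinearMap.piMap (fun i => (W i).mkQ) ∘ₗ F
  have hG : Function.Surjective G :=
    (Function.Surjective.piMap fun i => (W i).mkQ_surjective).comp hF
  have hspanG : Submodule.span R ((s.image G : Finset _) : Set (∀ i, N i ⧸ W i)) = ⊤ := by
    rw [Finset.coe_image, Submodule.span_image, hspan, Submodule.map_top,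
      LinearMap.range_eq_top.mpr hG]
  have hm : (m : ℕ∞) ≤ (s.image G).card := by
    simpa using Module.length_le_card_of_span_eq_top IsLocalRing.isCoatom_nonunitsIdeal
      (fun a ha x => funext fun i => IsLocalRing.smul_eq_zero_of_not_isUnit ha (x i)) _ hspanG
  exact (Nat.cast_le.mp hm).trans (Finset.card_image_le.trans hs.le)
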